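/- Let k ≥ 1 and let G be a graph of order n containing no path on k+2 vertices. Then e(G) ≤ kn/2, with equality if and only if G is a vertex-disjoint union of copies of the complete graph K_{k+1}. -/

import Mathlib

open scoped Classical

/-- The signless Laplacian matrix `Q(G) = D(G) + A(G)` of a finite simple graph. -/
noncomputable def signlessLaplacian {V : Type*} [Fintype V] (G : SimpleGraph V) :
    Matrix V V ℝ :=
  Matrix.diagonal (fun v => (G.degree v : ℝ)) + G.adjMatrix ℝ

/-- The `Q`-index of `G`: the largest eigenvalue of the signless Laplacian. -/
noncomputable def qIndex {V : Type*} [Fintype V] (G : SimpleGraph V) : ℝ :=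
  sSup (spectrum ℝ (signlessLaplacian G))

/-- `G` contains a copy of `F` (a subgraph isomorphic to `F`). -/
def HasCopy {α β : Type*} (F : SimpleGraph α) (G : SimpleGraph β) : Prop :=
  ∃ f : F →g G, Function.Injective f

/-- The graph `S_{n,k}^+`: a `k`-clique joined to an independent set of `n - k`
vertices, with one extra edge added inside the independent set
(between vertices `k` and `k+1`). -/
def SnkPlus (n k : ℕ) : SimpleGraph (Fin n) where
  Adj i j := i ≠ j ∧ ((i : ℕ) < k ∨ (j : ℕ) < k ∨ ((i : ℕ) < k + 2 ∧ (j : ℕ) < k + 2))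
  symm := ⟨by intro i j h; exact ⟨h.1.symm, by tauto⟩⟩
  loopless := ⟨by intro i h; exact h.1 rfl⟩

/-- `L_{t,k} = K_1 ∨ (t · K_k)`: `t` copies of `K_{k+1}` sharing one common vertex
(vertex `0`, the center). -/
def Lgraph (t k : ℕ) : SimpleGraph (Fin (t * k + 1)) where
  Adj i j := i ≠ j ∧ ((i : ℕ) = 0 ∨ (j : ℕ) = 0 ∨ ((i : ℕ) - 1) / k = ((j : ℕ) - 1) / k)
  symm := ⟨by intro i j h; exact ⟨h.1.symm, by tauto⟩⟩
  loopless := ⟨by intro i h; exact h.1 rfl⟩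

/-- Disjoint union of `t` copies of `K_{k+1}`. -/
def disjointCliques (t k : ℕ) : SimpleGraph (Fin t × Fin (k + 1)) where
  Adj i j := i ≠ j ∧ i.1 = j.1
  symm := ⟨by intro i j h; exact ⟨h.1.symm, h.2.symm⟩⟩
  loopless := ⟨by intro i h; exact h.1 rfl⟩

/-- `K_1 ∨ ((t-1)·K_k ∪ K_{k+1})` on `t*k + 2` vertices: vertex `0` is the center,
the last block has `k+1` vertices. -/
def Mgraph (t k : ℕ) : SimpleGraph (Fin (t * k + 2)) where
  Adj i j := i ≠ j ∧ ((i : ℕ) = 0 ∨ (j : ℕ) = 0 ∨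
    min (((i : ℕ) - 1) / k) (t - 1) = min (((j : ℕ) - 1) / k) (t - 1))
  symm := ⟨by intro i j h; exact ⟨h.1.symm, by tauto⟩⟩
  loopless := ⟨by intro i h; exact h.1 rfl⟩

/-- Two disjoint graphs `L_{s,k}` and `L_{t,k}` with their centers joined by an edge. -/
def DLgraph (s t k : ℕ) : SimpleGraph (Fin (s * k + 1) ⊕ Fin (t * k + 1)) where
  Adj x y :=
    match x, y with
    | .inl a, .inl b => (Lgraph s k).Adj a b
    | .inr a, .inr b => (Lgraph t k).Adj a b
    | .inl a, .inr b => (a : ℕ) = 0 ∧ (b : ℕ) = 0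
    | .inr a, .inl b => (a : ℕ) = 0 ∧ (b : ℕ) = 0
  symm := ⟨by
    intro x y h
    cases x <;> cases y <;> simp_all <;>
      first
        | exact ((Lgraph _ _).adj_symm h)⟩
  loopless := ⟨by
    intro x h
    cases x
    · exact (Lgraph s k).irrefl h
    · exact (Lgraph t k).irrefl h⟩

/-- Number of edges of `G` lying inside the vertex set `X`. -/
noncomputable def edgesWithin {V : Type*} [Fintype V] (G : SimpleGraph V) (X : Finset V) : ℕ :=
  (G.induce (X : Set V)).edgeFinset.card

/-- Number of edges of `G` joining the disjoint vertex sets `X` and `Y`. -/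
noncomputable def edgesBetween {V : Type*} [Fintype V] (G : SimpleGraph V)
    (X Y : Finset V) : ℕ :=
  ((X ×ˢ Y).filter fun p => G.Adj p.1 p.2).card
open Finset
set_option linter.unusedSectionVars false
set_option linter.unnecessarySimpa false
set_option linter.unnecessarySeqFocus false
set_option linter.unusedTactic false

namespace EG

variable {V : Type*} [Fintype V]

/-- A path with `m+1` vertices `f 0, ..., f m`. -/
def GoodPath (G : SimpleGraph V) (m : ℕ) (f : ℕ → V) : Prop :=
  (∀ i ≤ m, ∀ j ≤ m, f i = f j → i = j) ∧ ∀ i < m, G.Adj (f i) (f (i + 1))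

theorem gp_mono {G : SimpleGraph V} {m m' : ℕ} {f : ℕ → V} (h : GoodPath G m f)
    (hm : m' ≤ m) : GoodPath G m' f :=
  ⟨fun i hi j hj => h.1 i (hi.trans hm) j (hj.trans hm), fun i hi => h.2 i (hi.trans_le hm)⟩

theorem gp_rev {G : SimpleGraph V} {m : ℕ} {f : ℕ → V} (h : GoodPath G m f) :
    GoodPath G m (fun i => f (m - i)) := by
  constructor
  · intro i hi j hj hij
    have := h.1 (m - i) (by omega) (m - j) (by omega) hij
    omega
  · intro i hi
    have ha := h.2 (m - i - 1) (by omega)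
    have h1 : m - i - 1 + 1 = m - i := by omega
    have h2 : m - (i + 1) = m - i - 1 := by omega
    rw [h1] at ha
    show G.Adj (f (m - i)) (f (m - (i+1)))
    rw [h2]
    exact ha.symm

theorem gp_hasCopy {G : SimpleGraph V} {k : ℕ} {f : ℕ → V}
    (h : GoodPath G (k + 1) f) : HasCopy (SimpleGraph.pathGraph (k + 2)) G := by
  refine ⟨⟨fun x => f x.val, ?_⟩, ?_⟩
  · intro x y hxy
    rw [SimpleGraph.pathGraph_adj] at hxy
    rcases hxy with h1 | h1
    · have := h.2 x.val (by omega)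
      rwa [h1] at this
    · have := h.2 y.val (by omega)
      rw [h1] at this
      exact this.symm
  · intro x y hxy
    exact Fin.ext (h.1 x.val (by omega) y.val (by omega) hxy)

/-- The induced subgraph on a finset, as a graph on the subtype. -/
def ind (G : SimpleGraph V) (S : Finset V) : SimpleGraph {x // x ∈ S} :=
  SimpleGraph.comap (fun x => (x : V)) G

theorem gp_ind {G : SimpleGraph V} {S : Finset V} {m : ℕ} {f : ℕ → {x // x ∈ S}}
    (h : GoodPath (ind G S) m f) : GoodPath G m (fun i => (f i : V)) := by
  refine ⟨fun i hi j hj hij => h.1 i hi j hj (Subtype.ext hij), fun i hi => h.2 i hi⟩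

theorem card_filter_subtype (S : Finset V) (p : V → Prop) :
    #(univ.filter fun x : {x // x ∈ S} => p x.val) = #(S.filter p) := by
  refine Finset.card_bij (fun x _ => x.val) ?_ ?_ ?_
  · intro x hx
    simp only [mem_filter, mem_univ, true_and] at hx
    exact mem_filter.2 ⟨x.2, hx⟩
  · intro x _ y _ h
    exact Subtype.ext h
  · intro v hv
    rw [mem_filter] at hv
    exact ⟨⟨v, hv.1⟩, by simp [hv.2], rfl⟩

theorem degree_eq_filter (G : SimpleGraph V) (v : V) :
    G.degree v = #(univ.filter (G.Adj v)) := by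
  rw [← SimpleGraph.card_neighborFinset_eq_degree, SimpleGraph.neighborFinset_eq_filter]

theorem deg_ind (G : SimpleGraph V) (S : Finset V) (x : {x // x ∈ S}) :
    (ind G S).degree x = #(S.filter (G.Adj x.val)) := by
  rw [degree_eq_filter]
  exact card_filter_subtype S (G.Adj x.val)

end EG

namespace EG
variable {V : Type*} [Fintype V]

theorem cross_symm (G : SimpleGraph V) (S T : Finset V) :
    ∑ v ∈ S, #(T.filter (G.Adj v)) = ∑ v ∈ T, #(S.filter (G.Adj v)) := by
  simp only [Finset.card_filter]
  rw [Finset.sum_comm]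
  refine Finset.sum_congr rfl fun u _ => Finset.sum_congr rfl fun v _ => ?_
  simp [SimpleGraph.adj_comm]

/-- Degree-sum splitting along `S` / `Sᶜ`. -/
theorem sum_deg_split (G : SimpleGraph V) (S : Finset V) :
    ∑ v, G.degree v =
      (∑ v ∈ S, #(S.filter (G.Adj v))) + (∑ v ∈ Sᶜ, #(Sᶜ.filter (G.Adj v)))
        + 2 * ∑ v ∈ S, #(Sᶜ.filter (G.Adj v)) := by
  have hsplit : ∀ v, G.degree v = #(S.filter (G.Adj v)) + #(Sᶜ.filter (G.Adj v)) := by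
    intro v
    rw [degree_eq_filter, ← Finset.card_union_of_disjoint, ← Finset.filter_union,
      Finset.union_compl]
    exact Finset.disjoint_filter_filter disjoint_compl_right
  rw [← Finset.sum_add_sum_compl S]
  simp only [hsplit]
  rw [Finset.sum_add_distrib, Finset.sum_add_distrib, cross_symm G Sᶜ S]
  ring

/-- Degree in `disjointCliques` is `k`. -/
theorem deg_cliques (t k : ℕ) (w : Fin t × Fin (k + 1)) :
    (disjointCliques t k).degree w = k := by
  rw [degree_eq_filter]
  have : (univ.filter ((disjointCliques t k).Adj w)) = ({w.1} ×ˢ (univ.erase w.2)) := by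
    ext u
    simp only [mem_filter, mem_univ, true_and, Finset.mem_product, Finset.mem_singleton,
      Finset.mem_erase]
    simp only [disjointCliques]
    constructor
    · rintro ⟨hne, hfst⟩
      exact ⟨hfst.symm, fun h => hne (Prod.ext hfst h.symm), trivial⟩
    · rintro ⟨hfst, hsnd, -⟩ <;> skip
      exact ⟨fun h => hsnd (by rw [h]), hfst.symm⟩
  rw [this, Finset.card_product, Finset.card_singleton, Finset.card_erase_of_mem (mem_univ _),
    Finset.card_univ, Fintype.card_fin]
  simp

theorem iso_degree {W : Type*} [Fintype W] {G : SimpleGraph V} {H : SimpleGraph W}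
    (e : G ≃g H) (v : V) : G.degree v = H.degree (e v) := by
  rw [degree_eq_filter, degree_eq_filter]
  refine Finset.card_bij (fun u _ => e u) ?_ ?_ ?_
  · intro u hu
    simp only [mem_filter, mem_univ, true_and] at hu ⊢
    exact e.map_adj_iff.2 hu
  · intro u _ u' _ h
    exact e.toEquiv.injective h
  · intro w hw
    simp only [mem_filter, mem_univ, true_and] at hw
    exact ⟨e.symm w, by simpa using e.symm.map_adj_iff.2 hw, by simp⟩

/-- If `G` is isomorphic to a disjoint union of `K_{k+1}`s, the degree sum is `k * |V|`. -/
theorem iso_sum_deg {G : SimpleGraph V} {t k : ℕ} (e : G ≃g disjointCliques t k) :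
    ∑ v, G.degree v = k * Fintype.card V := by
  have hc : Fintype.card V = t * (k + 1) := by
    rw [Fintype.card_congr e.toEquiv]
    simp
  calc ∑ v, G.degree v = ∑ v, (disjointCliques t k).degree (e v) := by
        exact Finset.sum_congr rfl fun v _ => iso_degree e v
    _ = ∑ w, (disjointCliques t k).degree w := Fintype.sum_equiv e.toEquiv _ _ (fun _ => rfl)
    _ = ∑ _w : Fin t × Fin (k+1), k := by simp only [deg_cliques]
    _ = k * Fintype.card V := by simp [hc, mul_comm, Fintype.card_prod]

end EG

namespace EG
variable {V : Type*} [Fintype V]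

/-- Empty graph iso. -/
noncomputable def isoEmpty (G : SimpleGraph V) (h : Fintype.card V = 0) (k : ℕ) :
    G ≃g disjointCliques 0 k := by
  have : IsEmpty V := Fintype.card_eq_zero_iff.mp h
  exact ⟨Equiv.equivOfIsEmpty _ _, fun {a} => isEmptyElim a⟩

/-- Complete graph on `k+1` vertices is `disjointCliques 1 k`. -/
noncomputable def isoComplete (G : SimpleGraph V) (k : ℕ) (hc : Fintype.card V = k + 1)
    (hcomp : ∀ v w : V, v ≠ w → G.Adj v w) : G ≃g disjointCliques 1 k := by
  have e : V ≃ Fin (k + 1) := Fintype.equivFinOfCardEq hc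
  refine ⟨e.trans ⟨fun a => ((0 : Fin 1), a), fun p => p.2, fun a => rfl,
    fun p => Prod.ext (Subsingleton.elim _ _) rfl⟩, ?_⟩
  intro a b
  constructor
  · rintro ⟨h1, -⟩
    refine hcomp a b fun hab => h1 ?_
    rw [hab]
  · intro hadj
    exact ⟨fun h => G.ne_of_adj hadj (e.injective (congrArg Prod.snd h)), rfl⟩

end EG

namespace EG
variable {V : Type*} [Fintype V]

/-- sum-congr for graph isos. -/
def isoSumCongr {α β α' β' : Type*} {G : SimpleGraph α} {H : SimpleGraph β}
    {G' : SimpleGraph α'} {H' : SimpleGraph β'} (e₁ : G ≃g G') (e₂ : H ≃g H') :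
    (G ⊕g H) ≃g (G' ⊕g H') := by
  refine ⟨Equiv.sumCongr e₁.toEquiv e₂.toEquiv, ?_⟩
  intro x y
  cases x <;> cases y <;> simp [e₁.map_adj_iff, e₂.map_adj_iff]

/-- Sum of two clique unions is a clique union. -/
def isoCliquesSum (t₁ t₂ k : ℕ) :
    (disjointCliques t₁ k ⊕g disjointCliques t₂ k) ≃g disjointCliques (t₁ + t₂) k := by
  refine ⟨(Equiv.sumProdDistrib (Fin t₁) (Fin t₂) (Fin (k+1))).symm.trans
    (Equiv.prodCongr finSumFinEquiv (Equiv.refl _)), ?_⟩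
  intro x y
  rcases x with p | p <;> rcases y with q | q <;>
    simp only [Equiv.trans_apply, Equiv.sumProdDistrib_symm_apply_left,
      Equiv.sumProdDistrib_symm_apply_right, Equiv.prodCongr_apply, Equiv.coe_refl,
      Prod.map_apply, finSumFinEquiv_apply_left, finSumFinEquiv_apply_right, id_eq,
      disjointCliques, SimpleGraph.sum_adj, ne_eq, Prod.ext_iff, Fin.ext_iff,
      Fin.coe_castAdd, Fin.coe_natAdd] <;>
    constructor <;> intro h <;> first | exact h.elim | omega

end EG

namespace EG
variable {V : Type*} [Fintype V]

/-- If no edges cross `S`/`Sᶜ`, then `G` splits as a disjoint sum. -/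
noncomputable def isoSplit (G : SimpleGraph V) (S : Finset V)
    (hnc : ∀ u ∉ S, ∀ w ∈ S, ¬ G.Adj u w) :
    G ≃g (ind G S ⊕g ind G Sᶜ) := by
  refine ⟨(Equiv.sumCompl (· ∈ S)).symm.trans
    (Equiv.sumCongr (Equiv.refl _) (Equiv.subtypeEquivRight fun x => (Finset.mem_compl).symm)), ?_⟩
  intro a b
  have key : ∀ x : V, ∀ hx : x ∈ S,
      ((Equiv.sumCompl (· ∈ S)).symm.trans
        (Equiv.sumCongr (Equiv.refl _)
          (Equiv.subtypeEquivRight fun x => (Finset.mem_compl (s := S)).symm))) x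
      = Sum.inl ⟨x, hx⟩ := by
    intro x hx
    simp [Equiv.sumCompl_symm_apply_of_pos hx]
  have key2 : ∀ x : V, ∀ hx : ¬ x ∈ S,
      ((Equiv.sumCompl (· ∈ S)).symm.trans
        (Equiv.sumCongr (Equiv.refl _)
          (Equiv.subtypeEquivRight fun x => (Finset.mem_compl (s := S)).symm))) x
      = Sum.inr ⟨x, Finset.mem_compl.2 hx⟩ := by
    intro x hx
    simp [Equiv.sumCompl_symm_apply_of_neg hx, Equiv.subtypeEquivRight]
    rfl
  by_cases ha : a ∈ S <;> by_cases hb : b ∈ S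
  · rw [key a ha, key b hb]; exact Iff.rfl
  · rw [key a ha, key2 b hb]
    exact iff_of_false (fun h => by simpa using h) fun h => hnc b hb a ha h.symm
  · rw [key2 a ha, key b hb]
    exact iff_of_false (fun h => by simpa using h) fun h => hnc a ha b hb h
  · rw [key2 a ha, key2 b hb]; exact Iff.rfl

/-- Glue two clique-decompositions across a component split. -/
noncomputable def isoGlue (G : SimpleGraph V) (S : Finset V)
    (hnc : ∀ u ∉ S, ∀ w ∈ S, ¬ G.Adj u w) {t₁ t₂ k : ℕ}
    (e₁ : ind G S ≃g disjointCliques t₁ k) (e₂ : ind G Sᶜ ≃g disjointCliques t₂ k) :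
    G ≃g disjointCliques (t₁ + t₂) k :=
  ((isoSplit G S hnc).trans (isoSumCongr e₁ e₂)).trans (isoCliquesSum t₁ t₂ k)

end EG

namespace EG
variable {V : Type*} [Fintype V]

theorem noesc (G : SimpleGraph V) (k : ℕ) (hk : 1 ≤ k) [Nonempty V]
    (hdeg : ∀ v, k + 1 ≤ 2 * G.degree v)
    (hfree : ∀ f : ℕ → V, ¬ GoodPath G (k + 1) f) :
    ∃ S : Finset V, S.Nonempty ∧ S.card ≤ k + 1 ∧
      ∀ u ∉ S, ∀ w ∈ S, ¬ G.Adj u w := by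
  set n := Fintype.card V with hn
  have hn1 : 1 ≤ n := Fintype.card_pos
  set P : ℕ → Prop := fun m => ∃ f : ℕ → V, GoodPath G m f with hP
  have hPbound : ∀ m, P m → m < n := by
    rintro m ⟨f, hf⟩
    have hcard : ((range (m+1)).image f).card = m + 1 := by
      rw [Finset.card_image_of_injOn, Finset.card_range]
      intro a ha b hb hab
      rw [Finset.coe_range, Set.mem_Iio] at ha hb
      exact hf.1 a (by omega) b (by omega) hab
    have := Finset.card_le_card ((range (m+1)).image f).subset_univ
    rw [hcard, Finset.card_univ] at this
    omega
  have hP1 : P 1 := by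
    obtain ⟨v⟩ := ‹Nonempty V›
    have hd : 0 < G.degree v := by have := hdeg v; omega
    obtain ⟨u, huv⟩ := G.degree_pos_iff_exists_adj v |>.1 hd
    refine ⟨fun i => if i = 0 then v else u, ?_, ?_⟩
    · intro i hi j hj hij
      have hne := G.ne_of_adj huv
      interval_cases i <;> interval_cases j <;> simp_all
    · intro i hi
      interval_cases i
      simpa using huv
  set M := Nat.findGreatest P n with hM
  have hM1 : 1 ≤ M := Nat.le_findGreatest hn1 hP1
  have hPM : P M := Nat.findGreatest_spec hn1 hP1
  have hMmax : ∀ g : ℕ → V, ¬ GoodPath G (M + 1) g := by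
    intro g hg
    have hp : P (M + 1) := ⟨g, hg⟩
    exact Nat.findGreatest_is_greatest (lt_add_one M) (hPbound _ hp).le hp
  have hMk : M ≤ k := by
    by_contra hc
    obtain ⟨f, hf⟩ := hPM
    exact hfree f (gp_mono hf (by omega))
  obtain ⟨f, hf⟩ := hPM
  set S := (range (M+1)).image f with hS
  have hScard : S.card = M + 1 := by
    rw [hS, Finset.card_image_of_injOn, Finset.card_range]
    intro a ha b hb hab
    rw [Finset.coe_range, Set.mem_Iio] at ha hb
    exact hf.1 a (by omega) b (by omega) hab
  -- absorption of neighbors of the first vertex of a maximum path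
  have habs : ∀ g : ℕ → V, GoodPath G M g → ∀ u, G.Adj u (g 0) →
      u ∈ (range (M+1)).image g := by
    intro g hg u hu
    by_contra hun
    refine hMmax (fun i => if i = 0 then u else g (i-1)) ⟨?_, ?_⟩
    · intro a ha b hb hab
      rcases Nat.eq_zero_or_pos a with ha0 | ha0 <;> rcases Nat.eq_zero_or_pos b with hb0 | hb0
      · omega
      · subst ha0
        have hab' : u = g (b - 1) := by simpa [show b ≠ 0 by omega] using hab
        exact absurd (Finset.mem_image.2 ⟨b - 1, Finset.mem_range.2 (by omega), hab'.symm⟩) hun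
      · subst hb0
        have hab' : u = g (a - 1) := by simpa [show a ≠ 0 by omega] using hab.symm
        exact absurd (Finset.mem_image.2 ⟨a - 1, Finset.mem_range.2 (by omega), hab'.symm⟩) hun
      · simp only [if_neg (by omega : a ≠ 0), if_neg (by omega : b ≠ 0)] at hab
        have := hg.1 (a-1) (by omega) (b-1) (by omega) hab
        omega
    · intro a ha
      rcases Nat.eq_zero_or_pos a with ha0 | ha0
      · subst ha0
        simpa using hu
      · simp only [if_neg (by omega : a ≠ 0), if_neg (by omega : a + 1 ≠ 0)]
        have := hg.2 (a-1) (by omega)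
        have h1 : a - 1 + 1 = a + 1 - 1 := by omega
        rwa [h1] at this
  -- endpoint degree counts
  have hA : #((range M).filter fun i => G.Adj (f 0) (f (i+1))) = G.degree (f 0) := by
    rw [degree_eq_filter]
    refine Finset.card_bij (fun i _ => f (i+1)) ?_ ?_ ?_
    · intro i hi
      simp only [Finset.mem_filter, Finset.mem_range] at hi
      simp [hi.2]
    · intro a ha b hb hab
      simp only [Finset.mem_filter, Finset.mem_range] at ha hb
      have := hf.1 (a+1) (by omega) (b+1) (by omega) hab
      omega
    · intro u hu
      simp only [Finset.mem_filter, Finset.mem_univ, true_and] at hu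
      have humem := habs f hf u hu.symm
      obtain ⟨j, hj, hju⟩ := Finset.mem_image.1 humem
      rw [Finset.mem_range] at hj
      have hj0 : j ≠ 0 := by
        rintro rfl
        rw [hju] at hu
        exact G.irrefl hu
      refine ⟨j - 1, ?_, ?_⟩
      · simp only [Finset.mem_filter, Finset.mem_range]
        rw [show j - 1 + 1 = j by omega, hju]
        exact ⟨by omega, hu⟩
      · show f (j - 1 + 1) = u
        rw [show j - 1 + 1 = j by omega]
        exact hju
  have hB : #((range M).filter fun i => G.Adj (f M) (f i)) = G.degree (f M) := by
    rw [degree_eq_filter]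
    refine Finset.card_bij (fun i _ => f i) ?_ ?_ ?_
    · intro i hi
      simp only [Finset.mem_filter, Finset.mem_range] at hi
      simp [hi.2]
    · intro a ha b hb hab
      simp only [Finset.mem_filter, Finset.mem_range] at ha hb
      exact hf.1 a (by omega) b (by omega) hab
    · intro u hu
      simp only [Finset.mem_filter, Finset.mem_univ, true_and] at hu
      have hfr : GoodPath G M (fun i => f (M - i)) := gp_rev hf
      have humem := habs _ hfr u (by simpa using hu.symm)
      obtain ⟨j, hj, hju⟩ := Finset.mem_image.1 humem
      rw [Finset.mem_range] at hj
      have hjM : M - j ≠ M := by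
        intro h
        rw [h] at hju
        rw [hju] at hu
        exact G.irrefl hu
      refine ⟨M - j, ?_, ?_⟩
      · simp only [Finset.mem_filter, Finset.mem_range]
        rw [hju]
        exact ⟨by omega, hu⟩
      · show f (M - j) = u
        exact hju
  -- pigeonhole: common rotation index
  obtain ⟨i, hi⟩ : ∃ i, i ∈ ((range M).filter fun i => G.Adj (f 0) (f (i+1))) ∩
      ((range M).filter fun i => G.Adj (f M) (f i)) := by
    by_contra hcon
    push_neg at hcon
    have hdisj : Disjoint ((range M).filter fun i => G.Adj (f 0) (f (i+1)))
        ((range M).filter fun i => G.Adj (f M) (f i)) := by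
      rw [Finset.disjoint_iff_inter_eq_empty]
      exact Finset.eq_empty_iff_forall_notMem.2 hcon
    have hcards := Finset.card_union_of_disjoint hdisj
    have hsub : ((range M).filter fun i => G.Adj (f 0) (f (i+1))) ∪
        ((range M).filter fun i => G.Adj (f M) (f i)) ⊆ range M :=
      Finset.union_subset (Finset.filter_subset _ _) (Finset.filter_subset _ _)
    have := Finset.card_le_card hsub
    rw [hcards, hA, hB, Finset.card_range] at this
    have h1 := hdeg (f 0)
    have h2 := hdeg (f M)
    omega
  rw [Finset.mem_inter, Finset.mem_filter, Finset.mem_filter, Finset.mem_range] at hi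
  obtain ⟨⟨hiM, hiA⟩, -, hiB⟩ := hi
  -- the rotated cycle
  set c : ℕ → V := fun j => if j ≤ i then f j else f (M + 1 + i - j) with hc
  have hc_le : ∀ a, a ≤ M → ∃ b ≤ M, c a = f b ∧ ((a ≤ i ∧ b = a) ∨ (i < a ∧ b = M + 1 + i - a)) := by
    intro a ha
    by_cases hai : a ≤ i
    · exact ⟨a, ha, by simp [hc, hai], Or.inl ⟨hai, rfl⟩⟩
    · exact ⟨M + 1 + i - a, by omega, by simp [hc, hai], Or.inr ⟨by omega, rfl⟩⟩
  have hc_inj : ∀ a ≤ M, ∀ b ≤ M, c a = c b → a = b := by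
    intro a ha b hb hab
    obtain ⟨a', ha', haa, hda⟩ := hc_le a ha
    obtain ⟨b', hb', hbb, hdb⟩ := hc_le b hb
    rw [haa, hbb] at hab
    have := hf.1 a' ha' b' hb' hab
    omega
  have hc_mem : ∀ a ≤ M, c a ∈ S := by
    intro a ha
    obtain ⟨b, hb, hab, -⟩ := hc_le a ha
    rw [hab, hS]
    exact Finset.mem_image.2 ⟨b, Finset.mem_range.2 (by omega), rfl⟩
  have hc_adj : ∀ a < M + 1, G.Adj (c a) (c ((a+1) % (M+1))) := by
    intro a ha
    rcases Nat.lt_or_ge a M with haM | haM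
    · rw [Nat.mod_eq_of_lt (by omega)]
      rcases Nat.lt_or_ge a i with hai | hai
      · have h1 : c a = f a := by
          simp only [hc]; rw [if_pos (show a ≤ i by omega)]
        have h2 : c (a+1) = f (a+1) := by
          simp only [hc]; rw [if_pos (show a + 1 ≤ i by omega)]
        rw [h1, h2]
        exact hf.2 a haM
      · rcases Nat.eq_or_lt_of_le hai with hai' | hai'
        · have h1 : c a = f i := by
            simp only [hc]; rw [if_pos (show a ≤ i by omega), hai']
          have h2 : c (a+1) = f M := by
            simp only [hc]; rw [if_neg (show ¬ a + 1 ≤ i by omega)]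
            rw [show M + 1 + i - (a+1) = M by omega]
          rw [h1, h2]
          exact hiB.symm
        · have h1 : c a = f (M + 1 + i - a) := by
            simp only [hc]; rw [if_neg (show ¬ a ≤ i by omega)]
          have h2 : c (a+1) = f (M + i - a) := by
            simp only [hc]; rw [if_neg (show ¬ a + 1 ≤ i by omega)]
            rw [show M + 1 + i - (a+1) = M + i - a by omega]
          rw [h1, h2]
          have := hf.2 (M + i - a) (by omega)
          rw [show M + i - a + 1 = M + 1 + i - a by omega] at this
          exact this.symm
    · have haM' : a = M := by omega
      subst haM'
      rw [Nat.mod_self]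
      have h1 : c M = f (i + 1) := by
        simp only [hc]; rw [if_neg (show ¬ M ≤ i by omega)]
        rw [show M + 1 + i - M = i + 1 by omega]
      have h2 : c 0 = f 0 := by
        simp only [hc]; rw [if_pos (show (0:ℕ) ≤ i by omega)]
      rw [h1, h2]
      exact hiA.symm
  have hc_image : (range (M+1)).image c = S := by
    refine Finset.eq_of_subset_of_card_le ?_ ?_
    · intro x hx
      obtain ⟨a, ha, hax⟩ := Finset.mem_image.1 hx
      rw [Finset.mem_range] at ha
      rw [← hax]
      exact hc_mem a (by omega)
    · rw [hScard, Finset.card_image_of_injOn, Finset.card_range]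
      intro a ha b hb hab
      rw [Finset.coe_range, Set.mem_Iio] at ha hb
      exact hc_inj a (by omega) b (by omega) hab
  -- conclusion
  refine ⟨S, ⟨f 0, Finset.mem_image.2 ⟨0, Finset.mem_range.2 (by omega), rfl⟩⟩,
    by omega, ?_⟩
  intro u hu w hw hadj
  obtain ⟨j₀, hj₀, hj₀w⟩ := Finset.mem_image.1 (hc_image ▸ hw)
  rw [Finset.mem_range] at hj₀
  refine hMmax (fun s => if s = 0 then u else c ((j₀ + (s-1)) % (M+1))) ⟨?_, ?_⟩
  · intro a ha b hb hab
    rcases Nat.eq_zero_or_pos a with ha0 | ha0 <;> rcases Nat.eq_zero_or_pos b with hb0 | hb0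
    · omega
    · subst ha0
      have hab' : u = c ((j₀ + (b-1)) % (M+1)) := by simpa [show b ≠ 0 by omega] using hab
      refine absurd ?_ hu
      rw [hab']
      exact hc_mem _ (Nat.le_of_lt_succ (Nat.mod_lt _ (by omega)))
    · subst hb0
      have hab' : u = c ((j₀ + (a-1)) % (M+1)) := by simpa [show a ≠ 0 by omega] using hab.symm
      refine absurd ?_ hu
      rw [hab']
      exact hc_mem _ (Nat.le_of_lt_succ (Nat.mod_lt _ (by omega)))
    · simp only [if_neg (by omega : a ≠ 0), if_neg (by omega : b ≠ 0)] at hab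
      have hmlt1 : (j₀ + (a-1)) % (M+1) < M + 1 := Nat.mod_lt _ (by omega)
      have hmlt2 : (j₀ + (b-1)) % (M+1) < M + 1 := Nat.mod_lt _ (by omega)
      have heq := hc_inj _ (by omega) _ (by omega) hab
      have hmodeq : (a - 1) ≡ (b - 1) [MOD M+1] := Nat.ModEq.add_left_cancel' j₀ heq
      have : (a-1) % (M+1) = (b-1) % (M+1) := hmodeq
      rw [Nat.mod_eq_of_lt (by omega), Nat.mod_eq_of_lt (by omega)] at this
      omega
  · intro a ha
    rcases Nat.eq_zero_or_pos a with ha0 | ha0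
    · subst ha0
      simp only [if_pos rfl, if_neg (by omega : (1:ℕ) ≠ 0)]
      rw [show (1:ℕ) - 1 = 0 by rfl, Nat.add_zero, Nat.mod_eq_of_lt (by omega), hj₀w]
      exact hadj
    · simp only [if_neg (by omega : a ≠ 0), if_neg (by omega : a + 1 ≠ 0)]
      set x := j₀ + (a - 1) with hx
      have hstep := hc_adj (x % (M+1)) (Nat.mod_lt _ (by omega))
      have hmm : (x % (M+1) + 1) % (M+1) = (x+1) % (M+1) := by
        conv_rhs => rw [Nat.add_mod]
        rw [Nat.mod_eq_of_lt (show 1 < M+1 by omega)]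
      rw [hmm] at hstep
      rw [show j₀ + (a + 1 - 1) = x + 1 by omega]
      exact hstep

end EG

namespace EG
variable {V : Type*} [Fintype V]

theorem sum_eq_of_le {a b c d : ℕ} (h1 : a ≤ c) (h2 : b ≤ d) (h : a + b = c + d) :
    a = c ∧ b = d := by omega

theorem sum_ind_deg (G : SimpleGraph V) (T : Finset V) :
    ∑ x : {x // x ∈ T}, (ind G T).degree x = ∑ w ∈ T, #(T.filter (G.Adj w)) := by
  rw [← Finset.sum_coe_sort T (fun w => #(T.filter (G.Adj w)))]
  exact Finset.sum_congr rfl (fun x _ => deg_ind G T x)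

/-- If `G - v` is a disjoint union of `(k+1)`-cliques and `v` has a neighbor,
then `G` contains a path on `k+2` vertices. -/
theorem pendant_clique_path {G : SimpleGraph V} {k t : ℕ} {v u : V}
    (hadj : G.Adj v u)
    (e : ind G ({v} : Finset V)ᶜ ≃g disjointCliques t k) :
    ∃ f : ℕ → V, GoodPath G (k + 1) f := by
  have hu : u ∈ ({v} : Finset V)ᶜ := by
    rw [Finset.mem_compl, Finset.mem_singleton]
    exact fun h => G.ne_of_adj hadj h.symm
  set p := e ⟨u, hu⟩ with hp
  set σ := Equiv.swap (0 : Fin (k+1)) p.2 with hσ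
  set q : ℕ → V := fun b =>
    ((e.symm (p.1, σ ⟨min (b-1) k, Nat.lt_succ_of_le (min_le_right _ _)⟩)) :
      {x // x ∈ ({v} : Finset V)ᶜ}).val with hq
  have hqv : ∀ b, q b ≠ v := by
    intro b
    have hmem := (e.symm (p.1, σ ⟨min (b-1) k, Nat.lt_succ_of_le (min_le_right _ _)⟩)).2
    rw [Finset.mem_compl, Finset.mem_singleton] at hmem
    exact hmem
  have hqinj : ∀ a ≥ 1, ∀ b ≥ 1, a ≤ k + 1 → b ≤ k + 1 → q a = q b → a = b := by
    intro a ha b hb hak hbk hab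
    have h1 := Subtype.ext hab
    have h2 := e.symm.toEquiv.injective h1
    have h3 := congrArg Prod.snd h2
    simp only at h3
    have h4 := σ.injective h3
    have h5 : min (a-1) k = min (b-1) k := congrArg Fin.val h4
    omega
  refine ⟨fun i => if i = 0 then v else q i, ?_, ?_⟩
  · intro a ha b hb hab
    rcases Nat.eq_zero_or_pos a with ha0 | ha0 <;> rcases Nat.eq_zero_or_pos b with hb0 | hb0
    · omega
    · subst ha0
      have hab' : v = q b := by simpa [show b ≠ 0 by omega] using hab
      exact absurd hab'.symm (hqv b)
    · subst hb0
      have hab' : v = q a := by simpa [show a ≠ 0 by omega] using hab.symm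
      exact absurd hab'.symm (hqv a)
    · have hab' : q a = q b := by
        simpa [show a ≠ 0 by omega, show b ≠ 0 by omega] using hab
      exact hqinj a (by omega) b (by omega) (by omega) (by omega) hab'
  · intro i hi
    rcases Nat.eq_zero_or_pos i with hi0 | hi0
    · subst hi0
      simp only [if_pos rfl, if_neg (show (1:ℕ) ≠ 0 by omega)]
      have hzz : σ ⟨min (1-1) k, Nat.lt_succ_of_le (min_le_right _ _)⟩ = p.2 := by
        have h0 : (⟨min (1-1) k, Nat.lt_succ_of_le (min_le_right _ _)⟩ : Fin (k+1)) = 0 := by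
          apply Fin.ext; simp
        rw [h0, hσ]
        exact Equiv.swap_apply_left _ _
      have hq1 : q 1 = u := by
        rw [hq]
        simp only [hzz]
        rw [show ((p.1, p.2) : Fin t × Fin (k+1)) = p from rfl, hp]
        rw [RelIso.symm_apply_apply]
      rw [hq1]
      exact hadj
    · simp only [if_neg (show i ≠ 0 by omega), if_neg (show i + 1 ≠ 0 by omega)]
      have hiadj : (disjointCliques t k).Adj
          (p.1, σ ⟨min (i-1) k, Nat.lt_succ_of_le (min_le_right _ _)⟩)
          (p.1, σ ⟨min (i+1-1) k, Nat.lt_succ_of_le (min_le_right _ _)⟩) := by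
        refine ⟨?_, rfl⟩
        intro hcon
        have h2 := σ.injective (congrArg Prod.snd hcon)
        have h3 := congrArg Fin.val h2
        simp only at h3
        omega
      exact e.symm.map_adj_iff.2 hiadj

end EG

namespace EG

theorem EGaux (n : ℕ) : ∀ (V : Type u) [Fintype V], Fintype.card V = n →
    ∀ k, 1 ≤ k → ∀ G : SimpleGraph V, (∀ f : ℕ → V, ¬ GoodPath G (k+1) f) →
    (∑ v, G.degree v ≤ k * n ∧
      ((∑ v, G.degree v) = k * n ↔ ∃ t, Nonempty (G ≃g disjointCliques t k))) := by
  induction n using Nat.strong_induction_on with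
  | _ n ih =>
  intro V _ hcard k hk G hfree
  by_cases hsmall : ∃ v : V, 2 * G.degree v ≤ k
  · -- delete a low-degree vertex
    obtain ⟨v, hv⟩ := hsmall
    have hne : Nonempty V := ⟨v⟩
    have hn1 : 1 ≤ n := by rw [← hcard]; exact Fintype.card_pos
    obtain ⟨m, rfl⟩ : ∃ m, n = m + 1 := ⟨n - 1, by omega⟩
    set T := ({v} : Finset V)ᶜ with hT
    have hTcard : Fintype.card {x // x ∈ T} = m := by
      rw [Fintype.card_coe, hT, Finset.card_compl, Finset.card_singleton, hcard]
      omega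
    have hTfree : ∀ f : ℕ → {x // x ∈ T}, ¬ GoodPath (ind G T) (k+1) f :=
      fun f hf => hfree _ (gp_ind hf)
    have IH := ih m (by omega) {x // x ∈ T} hTcard k hk (ind G T) hTfree
    have hdv : #(T.filter (G.Adj v)) = G.degree v := by
      rw [degree_eq_filter]
      congr 1
      ext x
      simp only [Finset.mem_filter, Finset.mem_compl, Finset.mem_singleton, Finset.mem_univ,
        true_and, hT]
      exact ⟨fun h => h.2, fun h => ⟨fun hxv => G.irrefl (hxv ▸ h), h⟩⟩
    have hsum : ∑ w, G.degree w
        = (∑ x : {x // x ∈ T}, (ind G T).degree x) + 2 * G.degree v := by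
      rw [sum_ind_deg]
      have hsplit := sum_deg_split G {v}
      rw [Finset.sum_singleton, Finset.sum_singleton] at hsplit
      have h0 : #(({v} : Finset V).filter (G.Adj v)) = 0 := by
        rw [Finset.card_eq_zero, Finset.filter_eq_empty_iff]
        intro x hx
        rw [Finset.mem_singleton] at hx
        subst hx
        exact fun h => G.irrefl h
      rw [h0, hdv] at hsplit
      rw [hsplit, ← hT]
      omega
    have hkn : k * (m + 1) = k * m + k := by ring
    constructor
    · rw [hsum, hkn]
      exact Nat.add_le_add IH.1 hv
    constructor
    · intro heq
      rw [hsum, hkn] at heq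
      obtain ⟨hA, hD⟩ := sum_eq_of_le IH.1 hv heq
      obtain ⟨t, ⟨e⟩⟩ := IH.2.1 hA
      have hdpos : 0 < G.degree v := by omega
      obtain ⟨u, hadj⟩ := (G.degree_pos_iff_exists_adj v).1 hdpos
      obtain ⟨f, hf⟩ := pendant_clique_path hadj (hT ▸ e)
      exact absurd hf (hfree f)
    · rintro ⟨t, ⟨e⟩⟩
      rw [iso_sum_deg e, hcard]
  · -- minimum degree at least (k+1)/2
    push_neg at hsmall
    have hdeg : ∀ v, k + 1 ≤ 2 * G.degree v := fun v => hsmall v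
    by_cases hzero : n = 0
    · subst hzero
      have hemp : IsEmpty V := Fintype.card_eq_zero_iff.1 hcard
      have hsum0 : ∑ v, G.degree v = 0 := by
        rw [Finset.univ_eq_empty, Finset.sum_empty]
      rw [hsum0]
      refine ⟨by omega, ?_, fun _ => by omega⟩
      intro _
      exact ⟨0, ⟨isoEmpty G hcard k⟩⟩
    · have hne : Nonempty V := Fintype.card_pos_iff.1 (by omega)
      obtain ⟨S, hSne, hScard, hnc⟩ := noesc G k hk hdeg hfree
      by_cases hTemp : Sᶜ = (∅ : Finset V)
      · -- S is everything: few vertices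
        have hSuniv : S = Finset.univ := by
          rwa [← Finset.compl_eq_empty_iff]
        have hnk : n ≤ k + 1 := by
          rw [← hcard, ← Finset.card_univ, ← hSuniv]
          exact hScard
        have hdle : ∀ w : V, G.degree w ≤ n - 1 := by
          intro w
          have := G.degree_lt_card_verts w
          omega
        constructor
        · calc ∑ w, G.degree w ≤ ∑ _w : V, (n-1) :=
                Finset.sum_le_sum (fun w _ => hdle w)
            _ = n * (n - 1) := by rw [Finset.sum_const, Finset.card_univ, hcard, smul_eq_mul]
            _ ≤ n * k := Nat.mul_le_mul_left n (by omega)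
            _ = k * n := Nat.mul_comm n k
        constructor
        · intro heq
          have hall : ∀ w : V, G.degree w = k := by
            by_contra hcon
            push_neg at hcon
            obtain ⟨w, hw⟩ := hcon
            have hwlt : G.degree w < k := by
              have := hdle w
              omega
            have : ∑ w, G.degree w < ∑ _w : V, k := by
              refine Finset.sum_lt_sum (fun i _ => by
                have := hdle i; omega) ⟨w, Finset.mem_univ w, hwlt⟩
            rw [Finset.sum_const, Finset.card_univ, hcard, smul_eq_mul, Nat.mul_comm] at this
            omega
          have hnk1 : n = k + 1 := by
            obtain ⟨w⟩ := hne
            have h1 := hall w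
            have h2 := hdle w
            omega
          have hcomp : ∀ a b : V, a ≠ b → G.Adj a b := by
            intro a b hab
            have hsub : G.neighborFinset a ⊆ Finset.univ.erase a := by
              intro x hx
              rw [SimpleGraph.mem_neighborFinset] at hx
              exact Finset.mem_erase.2 ⟨(G.ne_of_adj hx).symm, Finset.mem_univ x⟩
            have hcards : (Finset.univ.erase a).card ≤ (G.neighborFinset a).card := by
              rw [SimpleGraph.card_neighborFinset_eq_degree, hall,
                Finset.card_erase_of_mem (Finset.mem_univ a), Finset.card_univ, hcard]
              omega
            have heq2 := Finset.eq_of_subset_of_card_le hsub hcards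
            have : b ∈ G.neighborFinset a := by
              rw [heq2]
              exact Finset.mem_erase.2 ⟨hab.symm, Finset.mem_univ b⟩
            rwa [SimpleGraph.mem_neighborFinset] at this
          exact ⟨1, ⟨isoComplete G k (by rw [hcard, hnk1]) hcomp⟩⟩
        · rintro ⟨t, ⟨e⟩⟩
          rw [iso_sum_deg e, hcard]
      · -- proper split
        have hTne : (Sᶜ : Finset V).Nonempty := Finset.nonempty_iff_ne_empty.2 hTemp
        have hcards : S.card + Sᶜ.card = n := by
          rw [Finset.card_add_card_compl, hcard]
        have hS1 : 1 ≤ S.card := hSne.card_pos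
        have hT1 : 1 ≤ Sᶜ.card := hTne.card_pos
        have IH1 := ih S.card (by omega) {x // x ∈ S} (Fintype.card_coe S) k hk (ind G S)
          (fun f hf => hfree _ (gp_ind hf))
        have IH2 := ih Sᶜ.card (by omega) {x // x ∈ Sᶜ} (Fintype.card_coe Sᶜ) k hk (ind G Sᶜ)
          (fun f hf => hfree _ (gp_ind hf))
        have hcross : ∑ v ∈ S, #(Sᶜ.filter (G.Adj v)) = 0 := by
          refine Finset.sum_eq_zero fun v hvS => ?_
          rw [Finset.card_eq_zero, Finset.filter_eq_empty_iff]
          intro u hu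
          exact fun hadj => hnc u (Finset.mem_compl.1 hu) v hvS hadj.symm
        have hsum : ∑ w, G.degree w
            = (∑ x : {x // x ∈ S}, (ind G S).degree x)
              + (∑ x : {x // x ∈ Sᶜ}, (ind G Sᶜ).degree x) := by
          rw [sum_ind_deg, sum_ind_deg]
          have := sum_deg_split G S
          rw [hcross] at this
          omega
        have hkn : k * S.card + k * Sᶜ.card = k * n := by
          rw [← Nat.mul_add, hcards]
        constructor
        · rw [hsum, ← hkn]
          exact Nat.add_le_add IH1.1 IH2.1
        constructor
        · intro heq
          rw [hsum, ← hkn] at heq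
          obtain ⟨hA, hB⟩ := sum_eq_of_le IH1.1 IH2.1 heq
          obtain ⟨t₁, ⟨e₁⟩⟩ := IH1.2.1 hA
          obtain ⟨t₂, ⟨e₂⟩⟩ := IH2.2.1 hB
          exact ⟨t₁ + t₂, ⟨isoGlue G S hnc e₁ e₂⟩⟩
        · rintro ⟨t, ⟨e⟩⟩
          rw [iso_sum_deg e, hcard]

end EG

/-- **Erdős–Gallai (paths).** If `G` has no path on `k+2` vertices, then
`e(G) ≤ k n / 2`, with equality iff `G` is a disjoint union of copies of `K_{k+1}`. -/
theorem erdos_gallai_path {V : Type*} [Fintype V] (k : ℕ) (hk : 1 ≤ k)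
    (G : SimpleGraph V) (hfree : ¬ HasCopy (SimpleGraph.pathGraph (k + 2)) G) :
    2 * G.edgeFinset.card ≤ k * Fintype.card V ∧
      (2 * G.edgeFinset.card = k * Fintype.card V ↔
        ∃ t, Nonempty (G ≃g disjointCliques t k)) := by
  have h2e : 2 * G.edgeFinset.card = ∑ v, G.degree v :=
    (SimpleGraph.sum_degrees_eq_twice_card_edges G).symm
  rw [h2e]
  exact EG.EGaux (Fintype.card V) V rfl k hk G (fun f hf => hfree (EG.gp_hasCopy hf))
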